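/- Let d ≥ 1, T > 0, and let p : ℝ × ℝ^d × ℝ × ℝ^d → [0,∞), written p(t, y | s, x), be a measurable family of transition densities satisfying the Chapman–Kolmogorov equations: for all s < t < u and all x, z ∈ ℝ^d, ∫_{ℝ^d} p(t, y | s, x) · p(u, z | t, y) dy = p(u, z | s, x). Let ν be a finite measure on ℝ^d, q : ℝ^d → [0,∞) measurable, and h(t, x) = ∫_{ℝ^d} p(T, y | t, x) q(y) ν(dy). Fix x₀ ∈ ℝ^d with 0 < h(0, x₀) < ∞, and times 0 = t₀ < t₁ ≤ t₂ ≤ … ≤ t_n < T. Assume p(T, y | 0, x₀) > 0 for ν-almost every y with q(y) > 0. Let ξ be the measure on ℝ^d defined by ξ(dy) = p(T, y | 0, x₀) q(y) ν(dy) / h(0, x₀). Then for every measurable g : (ℝ^d)^n → [0,∞]: ∫_{(ℝ^d)^n} g(x₁,…,x_n) [∏_{i=1}^n p(t_i, x_i | t_{i−1}, x_{i−1})] · (h(t_n, x_n)/h(0, x₀)) dx₁…dx_n = ∫_{ℝ^d} ( ∫_{(ℝ^d)^n} g(x₁,…,x_n) [∏_{i=1}^n p(t_i, x_i | t_{i−1},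 x_{i−1})] · (p(T, y | t_n, x_n)/p(T, y | 0, x₀)) dx₁…dx_n ) ξ(dy). -/

import Mathlib

/-!
Both sides equal `∫∫ A(x) p(T, y | tₙ, xₙ) q(y) / h(0, x₀) ν(dy) dx`, where `A(x)` is `g` times the
product of transition densities. On the right, the density `p(T, y | 0, x₀)` of `ξ` cancels the
normalisation of the bridge wherever `q(y) > 0`, and there it is ν-a.e. positive; what remains is
Tonelli's theorem.
-/

open MeasureTheory ENNReal NNReal

/-- The `h`-function of Doob's `h`-transform:
`h(t, x) = ∫ p(T, y | t, x) q(y) ν(dy)`. -/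
noncomputable def doobH {d : ℕ}
    (p : ℝ → (Fin d → ℝ) → ℝ → (Fin d → ℝ) → ℝ≥0)
    (q : (Fin d → ℝ) → ℝ≥0) (ν : Measure (Fin d → ℝ))
    (T t : ℝ) (x : Fin d → ℝ) : ℝ≥0∞ :=
  ∫⁻ y, (p T y t x : ℝ≥0∞) * (q y : ℝ≥0∞) ∂ν

theorem measurable_vecCons_apply {α : Type*} [MeasurableSpace α] {n : ℕ} (a : α) (j : Fin (n + 1)) :
    Measurable fun x : Fin n → α => Matrix.vecCons a x j := by
  cases j using Fin.cases with
  | zero => simp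
  | succ i => simpa using measurable_pi_apply i

theorem lintegral_mul_lintegral_div_eq_lintegral_withDensity
    {X Y : Type*} [MeasurableSpace X] [MeasurableSpace Y] {μ : Measure X} {ν : Measure Y}
    [SFinite μ] [SFinite ν] {A : X → ℝ≥0∞} {k : X → Y → ℝ≥0∞} {c q : Y → ℝ≥0∞} (Z : ℝ≥0∞)
    (hA : Measurable A) (hk : Measurable (Function.uncurry k)) (hc : Measurable c)
    (hq : Measurable q) (hcq : ∀ᵐ y ∂ν, q y ≠ 0 → c y ≠ 0 ∧ c y ≠ ∞) :
    ∫⁻ x, A x * ((∫⁻ y, k x y * q y ∂ν) / Z) ∂μ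
      = ∫⁻ y, ∫⁻ x, A x * (k x y / c y) ∂μ ∂(ν.withDensity fun y => c y * q y / Z) := by
  have hk_left (y : Y) : Measurable fun x => k x y :=
    hk.comp (measurable_id.prodMk measurable_const)
  have hinner : Measurable fun y => ∫⁻ x, A x * (k x y / c y) ∂μ :=
    Measurable.lintegral_prod_left'
      ((hA.comp measurable_fst).mul (hk.div (hc.comp measurable_snd)))
  have hcancel : ∀ᵐ y ∂ν, ∀ x,
      A x * (k x y * q y / Z) = A x * (k x y / c y) * (c y * q y / Z) := by
    filter_upwards [hcq] with y hy x
    rcases eq_or_ne (q y) 0 with hq0 | hq0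
    · simp [hq0]
    · obtain ⟨hc0, hctop⟩ := hy hq0
      calc A x * (k x y * q y / Z) = A x * (k x y / c y * c y * q y / Z) := by
            rw [ENNReal.div_mul_cancel hc0 hctop]
        _ = A x * (k x y / c y) * (c y * q y / Z) := by
            simp only [div_eq_mul_inv]; ring
  calc ∫⁻ x, A x * ((∫⁻ y, k x y * q y ∂ν) / Z) ∂μ
      = ∫⁻ x, ∫⁻ y, A x * (k x y * q y / Z) ∂ν ∂μ := by
        refine lintegral_congr fun x => ?_
        simp_rw [div_eq_mul_inv]
        rw [← lintegral_mul_const _ (by fun_prop), ← lintegral_const_mul _ (by fun_prop)]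
    _ = ∫⁻ y, ∫⁻ x, A x * (k x y * q y / Z) ∂μ ∂ν :=
        lintegral_lintegral_swap (by fun_prop)
    _ = ∫⁻ y, (c y * q y / Z) * ∫⁻ x, A x * (k x y / c y) ∂μ ∂ν := by
        refine lintegral_congr_ae (hcancel.mono fun y hy => ?_)
        simp_rw [hy, mul_comm _ (c y * q y / Z)]
        exact lintegral_const_mul _ (hA.mul ((hk_left y).div_const _))
    _ = _ := (lintegral_withDensity_eq_lintegral_mul ν (by fun_prop) hinner).symm

theorem conditioned_fdd_decomposition_general {d : ℕ} (T : ℝ)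
    (p : ℝ → (Fin d → ℝ) → ℝ → (Fin d → ℝ) → ℝ≥0)
    (hp : Measurable (fun w : ℝ × (Fin d → ℝ) × ℝ × (Fin d → ℝ) =>
      p w.1 w.2.1 w.2.2.1 w.2.2.2))
    (ν : Measure (Fin d → ℝ)) [IsFiniteMeasure ν]
    (q : (Fin d → ℝ) → ℝ≥0) (hq : Measurable q)
    (x₀ : Fin d → ℝ)
    (n : ℕ) (t : Fin (n + 1) → ℝ)
    (hppos : ∀ᵐ y ∂ν, 0 < q y → 0 < p T y 0 x₀) :
    ∀ g : ((Fin n → Fin d → ℝ) → ℝ≥0∞), Measurable g →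
      (∫⁻ x : Fin n → Fin d → ℝ,
          g x *
          (∏ i : Fin n, (p (t i.succ) (Matrix.vecCons x₀ x i.succ)
              (t i.castSucc) (Matrix.vecCons x₀ x i.castSucc) : ℝ≥0∞)) *
          (doobH p q ν T (t (Fin.last n)) (Matrix.vecCons x₀ x (Fin.last n)) /
            doobH p q ν T 0 x₀))
      = ∫⁻ y,
          (∫⁻ x : Fin n → Fin d → ℝ,
            g x *
            (∏ i : Fin n, (p (t i.succ) (Matrix.vecCons x₀ x i.succ)
                (t i.castSucc) (Matrix.vecCons x₀ x i.castSucc) : ℝ≥0∞)) *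
            ((p T y (t (Fin.last n)) (Matrix.vecCons x₀ x (Fin.last n)) : ℝ≥0∞) /
              (p T y 0 x₀ : ℝ≥0∞)))
          ∂(ν.withDensity fun y =>
              (p T y 0 x₀ : ℝ≥0∞) * (q y : ℝ≥0∞) / doobH p q ν T 0 x₀) := by
  intro g hg
  have hp_at {Ω : Type} [MeasurableSpace Ω] {a c : ℝ} {f₁ f₂ : Ω → Fin d → ℝ}
      (h₁ : Measurable f₁) (h₂ : Measurable f₂) :
      Measurable fun z => (p a (f₁ z) c (f₂ z) : ℝ≥0∞) :=
    (hp.comp (measurable_const.prodMk (h₁.prodMk (measurable_const.prodMk h₂)))).coe_nnreal_ennreal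
  have hcons := measurable_vecCons_apply (n := n) x₀
  refine lintegral_mul_lintegral_div_eq_lintegral_withDensity _ ?_ ?_ ?_ hq.coe_nnreal_ennreal ?_
  · exact hg.mul (Finset.measurable_prod _ fun i _ => hp_at (hcons _) (hcons _))
  · exact hp_at measurable_snd ((hcons _).comp measurable_fst)
  · exact hp_at measurable_id measurable_const
  · filter_upwards [hppos] with y hy hqy
    exact ⟨coe_ne_zero.2 (hy (pos_iff_ne_zero.2 (by exact_mod_cast hqy))).ne', coe_ne_top⟩

/-- Decomposition of the finite-dimensional distributions of the conditioned
(`h`-transformed) process as a mixture over the endpoint `y ∼ ξ` of the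
finite-dimensional distributions of the bridge pinned at `X_T = y`. -/
theorem conditioned_fdd_decomposition {d : ℕ} (hd : 1 ≤ d) (T : ℝ) (hT : 0 < T)
    (p : ℝ → (Fin d → ℝ) → ℝ → (Fin d → ℝ) → ℝ≥0)
    (hp : Measurable (fun w : ℝ × (Fin d → ℝ) × ℝ × (Fin d → ℝ) =>
      p w.1 w.2.1 w.2.2.1 w.2.2.2))
    (hCK : ∀ s t u : ℝ, s < t → t < u → ∀ x z : Fin d → ℝ,
      ∫⁻ y, (p t y s x : ℝ≥0∞) * (p u z t y : ℝ≥0∞) = (p u z s x : ℝ≥0∞))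
    (ν : Measure (Fin d → ℝ)) [IsFiniteMeasure ν]
    (q : (Fin d → ℝ) → ℝ≥0) (hq : Measurable q)
    (x₀ : Fin d → ℝ)
    (hh0pos : 0 < doobH p q ν T 0 x₀) (hh0fin : doobH p q ν T 0 x₀ < ⊤)
    (n : ℕ) (hn : 1 ≤ n) (t : Fin (n + 1) → ℝ)
    (ht0 : t 0 = 0) (ht01 : t 0 < t 1) (htmono : Monotone t)
    (htn : t (Fin.last n) < T)
    (hppos : ∀ᵐ y ∂ν, 0 < q y → 0 < p T y 0 x₀) :
    ∀ g : ((Fin n → Fin d → ℝ) → ℝ≥0∞), Measurable g →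
      (∫⁻ x : Fin n → Fin d → ℝ,
          g x *
          (∏ i : Fin n, (p (t i.succ) (Matrix.vecCons x₀ x i.succ)
              (t i.castSucc) (Matrix.vecCons x₀ x i.castSucc) : ℝ≥0∞)) *
          (doobH p q ν T (t (Fin.last n)) (Matrix.vecCons x₀ x (Fin.last n)) /
            doobH p q ν T 0 x₀))
      = ∫⁻ y,
          (∫⁻ x : Fin n → Fin d → ℝ,
            g x *
            (∏ i : Fin n, (p (t i.succ) (Matrix.vecCons x₀ x i.succ)
                (t i.castSucc) (Matrix.vecCons x₀ x i.castSucc) : ℝ≥0∞)) *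
            ((p T y (t (Fin.last n)) (Matrix.vecCons x₀ x (Fin.last n)) : ℝ≥0∞) /
              (p T y 0 x₀ : ℝ≥0∞)))
          ∂(ν.withDensity fun y =>
              (p T y 0 x₀ : ℝ≥0∞) * (q y : ℝ≥0∞) / doobH p q ν T 0 x₀) :=
  conditioned_fdd_decomposition_general T p hp ν q hq x₀ n t hppos
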